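/- arXiv:2510.27211 — 5 statements merged into one kernel-verified Lean document; each statement's English description precedes it below -/
import Mathlib

section
/- For any locally bounded function f : ℝⁿ → ℝ and γ > 0, the function x ↦ M^γ(M_γ f)(x) + (1/(2γ))‖x‖² equals the biconjugate (double Fenchel conjugate) of the function x ↦ f(x) + (1/(2γ))‖x‖². -/
/-! Writing `q y = ‖y‖² / (2γ)` and `g = f + q`, expanding the square gives
`‖y - z‖² / (2γ) = q y - ⟪z / γ, y⟫ + q z`. Hence `M_γ f z = q z - g* (z / γ)`, and the
same expansion turns `M^γ (M_γ f) x + q x` into `⨆ z, ⟪x, z / γ⟫ - g* (z / γ)`, which is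
`g** x` after the substitution `w = z / γ`. -/

open scoped RealInnerProductSpace
open Filter Topology

noncomputable section

/-- Lower Moreau envelope (extended-real valued). -/
def lowerEnv {n : ℕ} (γ : ℝ) (f : EuclideanSpace ℝ (Fin n) → ℝ)
    (x : EuclideanSpace ℝ (Fin n)) : EReal :=
  ⨅ y, ((f y + ‖y - x‖ ^ 2 / (2 * γ) : ℝ) : EReal)

/-- Upper Moreau envelope of an extended-real valued function. -/
def upperEnvE {n : ℕ} (γ : ℝ) (g : EuclideanSpace ℝ (Fin n) → EReal)
    (x : EuclideanSpace ℝ (Fin n)) : EReal :=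
  ⨆ y, (g y - ((‖y - x‖ ^ 2 / (2 * γ) : ℝ) : EReal))

/-- Fenchel (convex) conjugate of an extended-real valued function. -/
def fenchelConj {n : ℕ} (h : EuclideanSpace ℝ (Fin n) → EReal)
    (x : EuclideanSpace ℝ (Fin n)) : EReal :=
  ⨆ y, (((⟪x, y⟫ : ℝ) : EReal) - h y)

namespace EReal

def addCoeOrderIso (c : ℝ) : EReal ≃o EReal where
  toFun a := a + c
  invFun a := a - c
  left_inv _ := EReal.add_sub_cancel_right
  right_inv _ := EReal.sub_add_cancel
  map_rel_iff' := (addLECancellable_coe c).add_le_add_iff_right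

lemma iSup_add_coe {ι : Sort*} (b : ι → EReal) (c : ℝ) :
    (⨆ i, b i) + c = ⨆ i, (b i + c) :=
  (addCoeOrderIso c).map_iSup b

lemma coe_sub_iSup {ι : Sort*} (c : ℝ) (b : ι → EReal) :
    (c : EReal) - ⨆ i, b i = ⨅ i, ((c : EReal) - b i) := by
  have := (negOrderIso.trans (addCoeOrderIso c).dual).map_iSup b
  simp only [sub_eq_add_neg, add_comm (c : EReal)]
  exact this

lemma coe_sub_sub_coe_add_coe (a b c : ℝ) (x : EReal) :
    (a : EReal) - x - b + c = ((a - b + c : ℝ) : EReal) - x := by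
  induction x with
  | bot => rw [coe_sub_bot, coe_sub_bot, top_sub_coe, top_add_coe]
  | top => simp
  | coe x => norm_cast; ring

end EReal

lemma norm_sub_sq_div_two_mul {E : Type*} [NormedAddCommGroup E] [InnerProductSpace ℝ E]
    {γ : ℝ} (hγ : γ ≠ 0) (y z : E) :
    ‖y - z‖ ^ 2 / (2 * γ) = ‖y‖ ^ 2 / (2 * γ) - γ⁻¹ * ⟪y, z⟫ + ‖z‖ ^ 2 / (2 * γ) := by
  rw [norm_sub_sq_real]
  field_simp

lemma lowerEnv_eq_sub_fenchelConj {n : ℕ} {γ : ℝ} (hγ : γ ≠ 0)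
    (f : EuclideanSpace ℝ (Fin n) → ℝ) (z : EuclideanSpace ℝ (Fin n)) :
    lowerEnv γ f z = ((‖z‖ ^ 2 / (2 * γ) : ℝ) : EReal)
      - fenchelConj (fun y => ((f y + ‖y‖ ^ 2 / (2 * γ) : ℝ) : EReal)) (γ⁻¹ • z) := by
  rw [lowerEnv, fenchelConj, EReal.coe_sub_iSup]
  refine iInf_congr fun y => ?_
  rw [← EReal.coe_sub, ← EReal.coe_sub, norm_sub_sq_div_two_mul hγ, real_inner_smul_left,
    real_inner_comm]
  congr 1
  ring

lemma upperEnvE_sub_comp_smul_add {n : ℕ} {γ : ℝ} (hγ : γ ≠ 0)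
    (h : EuclideanSpace ℝ (Fin n) → EReal) (x : EuclideanSpace ℝ (Fin n)) :
    upperEnvE γ (fun z => ((‖z‖ ^ 2 / (2 * γ) : ℝ) : EReal) - h (γ⁻¹ • z)) x
      + ((‖x‖ ^ 2 / (2 * γ) : ℝ) : EReal) = fenchelConj h x := by
  have hsurj : Function.Surjective fun z : EuclideanSpace ℝ (Fin n) => γ⁻¹ • z :=
    fun w => ⟨γ • w, inv_smul_smul₀ hγ w⟩
  rw [upperEnvE, EReal.iSup_add_coe, fenchelConj,
    ← hsurj.iSup_comp fun w => ((⟪x, w⟫ : ℝ) : EReal) - h w]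
  refine iSup_congr fun z => ?_
  rw [EReal.coe_sub_sub_coe_add_coe, norm_sub_sq_div_two_mul hγ, real_inner_smul_right,
    real_inner_comm]
  congr 2
  ring

theorem stmt_1_general {n : ℕ} (γ : ℝ) (hγ : 0 < γ) (f : EuclideanSpace ℝ (Fin n) → ℝ)
    (x : EuclideanSpace ℝ (Fin n)) :
    upperEnvE γ (lowerEnv γ f) x + ((‖x‖ ^ 2 / (2 * γ) : ℝ) : EReal)
      = fenchelConj (fenchelConj (fun y => ((f y + ‖y‖ ^ 2 / (2 * γ) : ℝ) : EReal))) x := by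
  rw [funext (lowerEnv_eq_sub_fenchelConj hγ.ne' f)]
  exact upperEnvE_sub_comp_smul_add hγ.ne' _ x

theorem stmt_1 {n : ℕ} (γ : ℝ) (hγ : 0 < γ) (f : EuclideanSpace ℝ (Fin n) → ℝ)
    (hlb : ∀ x, ∃ C r : ℝ, 0 < r ∧ ∀ y, dist y x < r → |f y| ≤ C)
    (x : EuclideanSpace ℝ (Fin n)) :
    upperEnvE γ (lowerEnv γ f) x + ((‖x‖ ^ 2 / (2 * γ) : ℝ) : EReal)
      = fenchelConj (fenchelConj (fun y => ((f y + ‖y‖ ^ 2 / (2 * γ) : ℝ) : EReal))) x :=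
  stmt_1_general γ hγ f x
end
end

section
/- If f : ℝⁿ → ℝ is locally bounded, γ > 0, and the function x ↦ f(x) + (1/(2γ))‖x‖² is convex (i.e., f is (1/γ)-weakly convex), then M^γ(M_γ f)(x) = f(x) for all x. -/
open scoped RealInnerProductSpace
open Filter Topology

noncomputable section

/-- Existence of a subgradient of a real-valued convex function on Euclidean space. -/
lemma exists_subgradient' {n : ℕ} {g : EuclideanSpace ℝ (Fin n) → ℝ}
    (hg : ConvexOn ℝ Set.univ g) (x : EuclideanSpace ℝ (Fin n)) :
    ∃ v : EuclideanSpace ℝ (Fin n), ∀ y, g x + ⟪v, y - x⟫ ≤ g y := by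
  have hcont : Continuous g :=
    continuousOn_univ.mp (hg.continuousOn isOpen_univ)
  set S : Set (EuclideanSpace ℝ (Fin n) × ℝ) := {p | g p.1 < p.2} with hS
  have hSconv : Convex ℝ S := by
    intro p hp q hq a b ha hb hab
    simp only [hS, Set.mem_setOf_eq] at hp hq ⊢
    have h1 := hg.2 (Set.mem_univ p.1) (Set.mem_univ q.1) ha hb hab
    simp only [smul_eq_mul, Prod.fst_add, Prod.snd_add, Prod.smul_fst, Prod.smul_snd] at h1 ⊢
    rcases ha.eq_or_lt with rfl | ha'
    · have hb1 : b = 1 := by linarith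
      simp only [zero_smul, zero_add, zero_mul] at h1 ⊢
      calc g (b • q.1) ≤ b * g q.1 := h1
        _ < b * q.2 := by rw [hb1]; simpa using hq
    · calc g (a • p.1 + b • q.1) ≤ a * g p.1 + b * g q.1 := h1
        _ < a * p.2 + b * q.2 := by
            have h2 : a * g p.1 < a * p.2 := (mul_lt_mul_iff_right₀ ha').2 hp
            have h3 : b * g q.1 ≤ b * q.2 := mul_le_mul_of_nonneg_left hq.le hb
            linarith
  have hSopen : IsOpen S := isOpen_lt (hcont.comp continuous_fst) continuous_snd
  have hxS : (x, g x) ∉ S := by simp [hS]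
  obtain ⟨φ, hφ⟩ := geometric_hahn_banach_open_point hSconv hSopen hxS
  have hdec : ∀ (y : EuclideanSpace ℝ (Fin n)) (t : ℝ),
      φ (y, t) = φ (y, 0) + t * φ ((0 : EuclideanSpace ℝ (Fin n)), 1) := by
    intro y t
    have h : (y, t) = (y, (0:ℝ)) + t • ((0 : EuclideanSpace ℝ (Fin n)), (1:ℝ)) := by
      simp [Prod.ext_iff]
    rw [h, map_add, map_smul, smul_eq_mul]
  set ψ : EuclideanSpace ℝ (Fin n) → ℝ := fun y => φ (y, 0) with hψ
  set c : ℝ := φ ((0 : EuclideanSpace ℝ (Fin n)), 1) with hc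
  have hc0 : c < 0 := by
    have h := hφ (x, g x + 1) (by simp [hS])
    rw [hdec x (g x + 1), hdec x (g x)] at h
    nlinarith
  have hnc : (0:ℝ) < -c := by linarith
  have key : ∀ y, ψ y + g y * c ≤ ψ x + g x * c := by
    intro y
    by_contra h
    push_neg at h
    set δ := (ψ y + g y * c) - (ψ x + g x * c) with hδ
    have hδ0 : 0 < δ := by linarith
    have hε0 : 0 < δ / (-c) / 2 := by positivity
    have h2 := hφ (y, g y + δ / (-c) / 2) (by simp [hS]; linarith)
    rw [hdec y _, hdec x _] at h2
    have hgen : ∀ d e : ℝ, e < 0 → (d / (-e) / 2) * e = -(d/2) := by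
      intro d e he
      have : e ≠ 0 := he.ne
      field_simp
    have hcc := hgen δ c hc0
    nlinarith
  set w : EuclideanSpace ℝ (Fin n) :=
    (InnerProductSpace.toDual ℝ (EuclideanSpace ℝ (Fin n))).symm
      (φ.comp (ContinuousLinearMap.inl ℝ (EuclideanSpace ℝ (Fin n)) ℝ)) with hw
  have hwy : ∀ y : EuclideanSpace ℝ (Fin n), ⟪w, y⟫ = ψ y := by
    intro y
    rw [hw, InnerProductSpace.toDual_symm_apply]
    simp [hψ]
  refine ⟨-(c⁻¹ • w), fun y => ?_⟩
  have hinner : ⟪-(c⁻¹ • w), y - x⟫ = c⁻¹ * (ψ x - ψ y) := by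
    rw [inner_neg_left, real_inner_smul_left, inner_sub_right, hwy, hwy]
    ring
  rw [hinner]
  have hk := key y
  have hmul : c * (g x + c⁻¹ * (ψ x - ψ y)) ≥ c * g y := by
    rw [mul_add, ← mul_assoc, mul_inv_cancel₀ hc0.ne, one_mul]
    linarith
  nlinarith

theorem stmt_2 {n : ℕ} (γ : ℝ) (hγ : 0 < γ) (f : EuclideanSpace ℝ (Fin n) → ℝ)
    (hlb : ∀ x, ∃ C r : ℝ, 0 < r ∧ ∀ y, dist y x < r → |f y| ≤ C)
    (hconv : ConvexOn ℝ Set.univ (fun x => f x + ‖x‖ ^ 2 / (2 * γ)))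
    (x : EuclideanSpace ℝ (Fin n)) :
    upperEnvE γ (lowerEnv γ f) x = (f x : EReal) := by
  have h2γ : (0:ℝ) < 2 * γ := by linarith
  refine le_antisymm ?_ ?_
  · -- upper bound
    refine iSup_le fun z => ?_
    have h1 : lowerEnv γ f z ≤ ((f x + ‖x - z‖ ^ 2 / (2 * γ) : ℝ) : EReal) := iInf_le _ x
    calc lowerEnv γ f z - ((‖z - x‖ ^ 2 / (2 * γ) : ℝ) : EReal)
        ≤ ((f x + ‖x - z‖ ^ 2 / (2 * γ) : ℝ) : EReal) - ((‖z - x‖ ^ 2 / (2 * γ) : ℝ) : EReal) :=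
          EReal.sub_le_sub h1 le_rfl
      _ = ((f x + ‖x - z‖ ^ 2 / (2 * γ) - ‖z - x‖ ^ 2 / (2 * γ) : ℝ) : EReal) :=
          (EReal.coe_sub _ _).symm
      _ = ((f x : ℝ) : EReal) := by
          rw [norm_sub_rev x z]; norm_cast; ring
  · -- lower bound
    obtain ⟨v, hv⟩ := exists_subgradient' hconv x
    set z₀ : EuclideanSpace ℝ (Fin n) := γ • v with hz₀
    have hkey : ∀ y, f x + ‖x - z₀‖ ^ 2 / (2 * γ) ≤ f y + ‖y - z₀‖ ^ 2 / (2 * γ) := by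
      intro y
      have hsub := hv y
      rw [inner_sub_right] at hsub
      have e1 : ‖y - z₀‖ ^ 2 = ‖y‖ ^ 2 - 2 * (γ * ⟪v, y⟫) + ‖z₀‖ ^ 2 := by
        rw [norm_sub_sq_real, hz₀, real_inner_smul_right, real_inner_comm]
      have e2 : ‖x - z₀‖ ^ 2 = ‖x‖ ^ 2 - 2 * (γ * ⟪v, x⟫) + ‖z₀‖ ^ 2 := by
        rw [norm_sub_sq_real, hz₀, real_inner_smul_right, real_inner_comm]
      rw [e1, e2]
      have hne : (2 * γ) ≠ 0 := h2γ.ne'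
      have expand : ∀ u a : ℝ, (u - 2 * (γ * a) + ‖z₀‖ ^ 2) / (2 * γ)
          = u / (2 * γ) - a + ‖z₀‖ ^ 2 / (2 * γ) := by
        intro u a; field_simp
      rw [expand, expand]
      linarith
    have hL : ((f x + ‖x - z₀‖ ^ 2 / (2 * γ) : ℝ) : EReal) ≤ lowerEnv γ f z₀ :=
      le_iInf fun y => EReal.coe_le_coe_iff.2 (hkey y)
    have hstep : ((f x : ℝ) : EReal)
        ≤ lowerEnv γ f z₀ - ((‖z₀ - x‖ ^ 2 / (2 * γ) : ℝ) : EReal) := by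
      calc ((f x : ℝ) : EReal)
          = ((f x + ‖x - z₀‖ ^ 2 / (2 * γ) - ‖z₀ - x‖ ^ 2 / (2 * γ) : ℝ) : EReal) := by
            rw [norm_sub_rev x z₀]; norm_cast; ring
        _ = ((f x + ‖x - z₀‖ ^ 2 / (2 * γ) : ℝ) : EReal)
            - ((‖z₀ - x‖ ^ 2 / (2 * γ) : ℝ) : EReal) := EReal.coe_sub _ _
        _ ≤ _ := EReal.sub_le_sub hL le_rfl
    exact hstep.trans (le_iSup (fun z => lowerEnv γ f z - ((‖z - x‖ ^ 2 / (2 * γ) : ℝ) : EReal)) z₀)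
end
end

section
/- If f : ℝⁿ → ℝ is locally bounded, γ > 0, and M^γ(M_γ f) = f pointwise, then f is (1/γ)-weakly convex, i.e., x ↦ f(x) + (1/(2γ))‖x‖² is convex. -/
open scoped RealInnerProductSpace
open Filter Topology

noncomputable section

/-!
Whatever `g` is, `M^γ g x + ‖x‖² / (2γ) = sup_y (g y - ‖y‖² / (2γ) + ⟪y, x⟫ / γ)` is a supremum
of affine functions of `x`, hence convex. Applied to `g = M_γ f`, the hypothesis
`M^γ (M_γ f) = f` turns this supremum into `f + ‖·‖² / (2γ)`.
-/

lemma sub_norm_sub_sq_div_eq {E : Type*} [NormedAddCommGroup E] [InnerProductSpace ℝ E]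
    (γ r : ℝ) (y x : E) :
    r - ‖y - x‖ ^ 2 / (2 * γ) = r - ‖y‖ ^ 2 / (2 * γ) + ⟪y, x⟫ / γ - ‖x‖ ^ 2 / (2 * γ) := by
  rw [norm_sub_sq_real]
  ring

lemma le_upperEnvE {n : ℕ} (γ : ℝ) (g : EuclideanSpace ℝ (Fin n) → EReal)
    (y x : EuclideanSpace ℝ (Fin n)) :
    g y - ((‖y - x‖ ^ 2 / (2 * γ) : ℝ) : EReal) ≤ upperEnvE γ g x :=
  le_iSup (fun y => g y - ((‖y - x‖ ^ 2 / (2 * γ) : ℝ) : EReal)) y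

theorem convexOn_add_norm_sq_div_of_upperEnvE_eq {n : ℕ} (γ : ℝ)
    (g : EuclideanSpace ℝ (Fin n) → EReal) (f : EuclideanSpace ℝ (Fin n) → ℝ)
    (hf : ∀ x, upperEnvE γ g x = f x) :
    ConvexOn ℝ Set.univ (fun x => f x + ‖x‖ ^ 2 / (2 * γ)) := by
  refine ⟨convex_univ, fun x _ z _ a b ha hb hab => ?_⟩
  have hterm (y w) : g y - ((‖y - w‖ ^ 2 / (2 * γ) : ℝ) : EReal) ≤ f w :=
    (le_upperEnvE γ g y w).trans_eq (hf w)
  set c := a • x + b • z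
  suffices h : ∀ y, g y - ((‖y - c‖ ^ 2 / (2 * γ) : ℝ) : EReal) ≤
      ((a * (f x + ‖x‖ ^ 2 / (2 * γ)) + b * (f z + ‖z‖ ^ 2 / (2 * γ)) - ‖c‖ ^ 2 / (2 * γ) : ℝ) :
        EReal) by
    have hfc := (hf c).symm.trans_le (iSup_le h)
    simp only [smul_eq_mul]
    linarith [EReal.coe_le_coe_iff.1 hfc]
  intro y
  cases hgy : g y using EReal.rec with
  | bot => simp
  | top => simpa [hgy] using hterm y x
  | coe r =>
    have hx : r - ‖y - x‖ ^ 2 / (2 * γ) ≤ f x := by exact_mod_cast hgy ▸ hterm y x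
    have hz : r - ‖y - z‖ ^ 2 / (2 * γ) ≤ f z := by exact_mod_cast hgy ▸ hterm y z
    suffices r - ‖y - c‖ ^ 2 / (2 * γ) ≤ _ by exact_mod_cast this
    rw [sub_norm_sub_sq_div_eq] at hx hz ⊢
    rw [inner_add_right, inner_smul_right, inner_smul_right, add_div, mul_div_assoc,
      mul_div_assoc]
    obtain rfl : b = 1 - a := by linarith
    linarith [mul_le_mul_of_nonneg_left hx ha, mul_le_mul_of_nonneg_left hz hb]

theorem stmt_3_general {n : ℕ} (γ : ℝ) (f : EuclideanSpace ℝ (Fin n) → ℝ)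
    (heq : ∀ x, upperEnvE γ (lowerEnv γ f) x = (f x : EReal)) :
    ConvexOn ℝ Set.univ (fun x => f x + ‖x‖ ^ 2 / (2 * γ)) :=
  convexOn_add_norm_sq_div_of_upperEnvE_eq γ (lowerEnv γ f) f heq

theorem stmt_3 {n : ℕ} (γ : ℝ) (hγ : 0 < γ) (f : EuclideanSpace ℝ (Fin n) → ℝ)
    (hlb : ∀ x, ∃ C r : ℝ, 0 < r ∧ ∀ y, dist y x < r → |f y| ≤ C)
    (heq : ∀ x, upperEnvE γ (lowerEnv γ f) x = (f x : EReal)) :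
    ConvexOn ℝ Set.univ (fun x => f x + ‖x‖ ^ 2 / (2 * γ)) :=
  stmt_3_general γ f heq
end
end

section
/- Suppose φ : ℝⁿ → ℝ ∪ {+∞} is proper and lower semicontinuous, f_Z is smooth, and f_Z = (1/σ²) M_1 φ + C for a constant C. Then for every x in the image of prox_φ, φ(x) = σ² M^{σ²} f_Z(x) − σ² C, where M^{σ²} f_Z(x) := sup_z ( f_Z(z) − (1/(2σ²))‖z−x‖² ). -/
open scoped RealInnerProductSpace
open Filter Topology

noncomputable section

theorem stmt_9 {n : ℕ} (σ : ℝ) (hσ : 0 < σ) (C : ℝ)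
    (φ : EuclideanSpace ℝ (Fin n) → EReal)
    (hproper : ∃ x, φ x ≠ ⊤) (hnbot : ∀ x, φ x ≠ ⊥)
    (hlsc : LowerSemicontinuous φ)
    (fZ : EuclideanSpace ℝ (Fin n) → ℝ)
    (hfZ_smooth : ContDiff ℝ (⊤ : ℕ∞) fZ)
    -- `f_Z = (1/σ²) M₁φ + C`, equivalently `M₁φ(x) = σ² (f_Z(x) − C)` for all `x`:
    (hM : ∀ x, (⨅ z, (φ z + ((‖z - x‖ ^ 2 / 2 : ℝ) : EReal)))
        = ((σ ^ 2 * (fZ x - C) : ℝ) : EReal)) :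
    ∀ x : EuclideanSpace ℝ (Fin n),
      -- `x` lies in the image of `prox_φ`:
      (∃ z₀, IsMinOn (fun w => φ w + ((‖w - z₀‖ ^ 2 / 2 : ℝ) : EReal)) Set.univ x) →
      φ x = ((σ ^ 2 * (⨆ z, (fZ z - ‖z - x‖ ^ 2 / (2 * σ ^ 2))) - σ ^ 2 * C : ℝ) : EReal) := by
  intro x ⟨z₀, hmin⟩
  have hs2 : (0:ℝ) < σ ^ 2 := by positivity
  -- the inf at z₀ is attained at x
  have hinf : (⨅ z, (φ z + ((‖z - z₀‖ ^ 2 / 2 : ℝ) : EReal)))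
      = φ x + ((‖x - z₀‖ ^ 2 / 2 : ℝ) : EReal) := by
    refine le_antisymm (iInf_le _ x) (le_iInf fun w => hmin (Set.mem_univ w))
  have hattain : φ x + ((‖x - z₀‖ ^ 2 / 2 : ℝ) : EReal)
      = ((σ ^ 2 * (fZ z₀ - C) : ℝ) : EReal) := by rw [← hinf, hM z₀]
  -- φ x is real
  have hnetop : φ x ≠ ⊤ := by
    intro h
    have htop : (⊤ : EReal) + ((‖x - z₀‖ ^ 2 / 2 : ℝ) : EReal) = ⊤ :=
      EReal.top_add_of_ne_bot (EReal.coe_ne_bot _)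
    rw [h, htop] at hattain
    exact (EReal.coe_ne_top _) hattain.symm
  set r : ℝ := (φ x).toReal with hr
  have hφx : φ x = (r : EReal) := (EReal.coe_toReal hnetop (hnbot x)).symm
  have hreq : r + ‖x - z₀‖ ^ 2 / 2 = σ ^ 2 * (fZ z₀ - C) := by
    rw [hφx] at hattain
    exact_mod_cast hattain
  -- upper bound for each z
  have hub : ∀ z, fZ z - ‖z - x‖ ^ 2 / (2 * σ ^ 2) ≤ r / σ ^ 2 + C := by
    intro z
    have h1 : ((σ ^ 2 * (fZ z - C) : ℝ) : EReal) ≤ φ x + ((‖x - z‖ ^ 2 / 2 : ℝ) : EReal) := by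
      rw [← hM z]
      exact iInf_le _ x
    rw [hφx] at h1
    have h2 : σ ^ 2 * (fZ z - C) ≤ r + ‖x - z‖ ^ 2 / 2 := by exact_mod_cast h1
    rw [norm_sub_rev] at h2
    rw [← sub_nonneg]
    have : r / σ ^ 2 + C - (fZ z - ‖z - x‖ ^ 2 / (2 * σ ^ 2))
        = (r + ‖z - x‖ ^ 2 / 2 - σ ^ 2 * (fZ z - C)) / σ ^ 2 := by
      field_simp; ring
    rw [this]
    apply div_nonneg _ hs2.le
    linarith
  -- attained at z₀
  have hat : fZ z₀ - ‖z₀ - x‖ ^ 2 / (2 * σ ^ 2) = r / σ ^ 2 + C := by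
    rw [norm_sub_rev]
    field_simp
    nlinarith [hreq]
  have hbdd : BddAbove (Set.range fun z => fZ z - ‖z - x‖ ^ 2 / (2 * σ ^ 2)) :=
    ⟨r / σ ^ 2 + C, by rintro _ ⟨z, rfl⟩; exact hub z⟩
  have hsup : (⨆ z, (fZ z - ‖z - x‖ ^ 2 / (2 * σ ^ 2))) = r / σ ^ 2 + C := by
    refine le_antisymm (ciSup_le hub) ?_
    rw [← hat]
    exact le_ciSup hbdd z₀
  rw [hφx, hsup]
  congr 1
  field_simp
  ring
end
end

section
/- Descent inequality for proximal gradient descent with a weakly convex regularizer: let f : ℝⁿ → ℝ have L-Lipschitz gradient, let g be proper, lower semicontinuous and ρ-weakly convex, let γ ∈ (0, 2/(L+ρ)), and let x_{k+1} ∈ prox_{γg}(x_k − γ∇f(x_k)). Then (1/γ − (L+ρ)/2) ‖x_k − x_{k+1}‖² ≤ F(x_k) − F(x_{k+1}), where F = f + g. -/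
/-!
The prox step makes `x1` a minimiser of `g` plus a smooth quadratic. Splitting this as the convex
function `g + ρ/2‖·‖²` plus a smooth remainder, first-order optimality yields the weak subgradient
inequality `g x0 ≥ g x1 + ⟪s, x0 - x1⟫ - ρ/2 ‖x0 - x1‖²` with `s = (x0 - x1)/γ - ∇f x0`.
Adding the descent lemma `f x1 ≤ f x0 + ⟪∇f x0, x1 - x0⟫ + L/2 ‖x1 - x0‖²` cancels the gradient
terms.
-/

open scoped NNReal RealInnerProductSpace
open Set

theorem ConvexOn.sub_le_of_isMinOn_add {E : Type*} [NormedAddCommGroup E] [NormedSpace ℝ E]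
    {h q : E → ℝ} {q' : E →L[ℝ] ℝ} {x : E} (hh : ConvexOn ℝ univ h) (hq : HasFDerivAt q q' x)
    (hmin : IsMinOn (fun z => h z + q z) univ x) (y : E) :
    h x - q' (y - x) ≤ h y := by
  -- `ψ` majorises `h + q` on the segment `[x, y]` and agrees with it at `t = 0`.
  set ψ : ℝ → ℝ := fun t => (1 - t) * h x + t * h y + q (x + t • (y - x))
  have hψ_min : IsMinOn ψ (Icc 0 1) 0 := by
    intro t ⟨ht0, ht1⟩
    have hconv := hh.2 (mem_univ x) (mem_univ y) (sub_nonneg.2 ht1) ht0 (by ring)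
    have hz : (1 - t) • x + t • y = x + t • (y - x) := by
      rw [smul_sub, sub_smul, one_smul]; abel
    rw [hz] at hconv
    have hmin_t := isMinOn_iff.mp hmin _ (mem_univ (x + t • (y - x)))
    simp only [smul_eq_mul] at hconv
    show ψ 0 ≤ ψ t
    simp only [ψ, zero_smul, add_zero, sub_zero, one_mul, zero_mul]
    linarith
  have hline : HasDerivAt (fun t : ℝ => x + t • (y - x)) (y - x) 0 := by
    simpa using ((hasDerivAt_id (0 : ℝ)).smul_const (y - x)).const_add x
  have hψ' : HasDerivAt ψ (h y - h x + q' (y - x)) 0 := by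
    have hq' := hq.comp_hasDerivAt_of_eq (0 : ℝ) hline (by simp)
    have hψ_sum := (((hasDerivAt_id (0 : ℝ)).const_sub 1).mul_const (h x)).add
      (((hasDerivAt_id (0 : ℝ)).mul_const (h y)).add hq')
    refine (hψ_sum.congr_deriv (by ring)).congr_of_eventuallyEq (.of_forall fun t => ?_)
    simp only [ψ, Pi.add_apply, Function.comp_apply, id]
    ring
  have hslope := hψ_min.localize.hasFDerivWithinAt_nonneg hψ'.hasFDerivAt.hasFDerivWithinAt
    (sub_mem_posTangentConeAt_of_segment_subset (segment_eq_Icc zero_le_one).subset)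
  simp only [ContinuousLinearMap.toSpanSingleton_apply, sub_zero, one_smul] at hslope
  linarith

variable {E : Type*} [NormedAddCommGroup E] [InnerProductSpace ℝ E]

theorem le_of_isMinOn_prox_of_convexOn_add_sq_norm {g : E → ℝ} {ρ γ : ℝ} {v x : E}
    (hg : ConvexOn ℝ univ (fun z => g z + ρ / 2 * ‖z‖ ^ 2))
    (hmin : IsMinOn (fun z => g z + ‖z - v‖ ^ 2 / (2 * γ)) univ x) (y : E) :
    g x + γ⁻¹ * ⟪v - x, y - x⟫ - ρ / 2 * ‖y - x‖ ^ 2 ≤ g y := by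
  have h1 := ((hasFDerivAt_id x).sub_const v).norm_sq
  have h2 := (hasFDerivAt_id x).norm_sq
  have hq := (h1.mul_const (2 * γ)⁻¹).sub (h2.const_mul (ρ / 2))
  have hsub := hg.sub_le_of_isMinOn_add hq (by simpa [div_eq_mul_inv] using hmin) y
  have hexp : ‖y‖ ^ 2 = ‖x‖ ^ 2 + 2 * ⟪x, y - x⟫ + ‖y - x‖ ^ 2 := by
    simpa using norm_add_sq_real x (y - x)
  simp only [mul_inv_rev, id_eq, map_sub, ContinuousLinearMap.comp_id, sub_apply, smul_apply,
    coe_innerSL_apply, nsmul_eq_mul, Nat.cast_ofNat, smul_eq_mul, tsub_le_iff_right] at hsub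
  simp only [inner_sub_left, inner_sub_right] at hsub hexp ⊢
  linear_combination hsub + ρ / 2 * hexp

theorem le_add_inner_add_of_lipschitzWith_gradient [CompleteSpace E] {f : E → ℝ} {Gf : E → E}
    {K : ℝ≥0} (hGf : ∀ x, HasGradientAt f (Gf x) x) (hLip : LipschitzWith K Gf) (x y : E) :
    f y ≤ f x + ⟪Gf x, y - x⟫ + K / 2 * ‖y - x‖ ^ 2 := by
  set d := y - x
  set φ : ℝ → ℝ := fun t => f (x + t • d) - t * ⟪Gf x, d⟫ - K / 2 * t ^ 2 * ‖d‖ ^ 2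
  set φ' : ℝ → ℝ := fun t => ⟪Gf (x + t • d), d⟫ - ⟪Gf x, d⟫ - K * t * ‖d‖ ^ 2
  have hφ : ∀ t, HasDerivAt φ (φ' t) t := by
    intro t
    have hline : HasDerivAt (fun s : ℝ => x + s • d) d t := by
      simpa using ((hasDerivAt_id t).smul_const d).const_add x
    have hf := (hGf _).hasFDerivAt.comp_hasDerivAt t hline
    have hφ_sum := (hf.sub ((hasDerivAt_id t).mul_const ⟪Gf x, d⟫)).sub
      (((hasDerivAt_pow 2 t).const_mul (K / 2 : ℝ)).mul_const (‖d‖ ^ 2))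
    refine (hφ_sum.congr_deriv ?_).congr_of_eventuallyEq (.of_forall fun s => rfl)
    simp only [φ', InnerProductSpace.toDual_apply_apply, Nat.cast_ofNat]
    ring
  have hφ'_nonpos : ∀ t ∈ interior (Icc (0 : ℝ) 1), φ' t ≤ 0 := by
    intro t ht
    rw [interior_Icc] at ht
    have hGf_diff : ‖Gf (x + t • d) - Gf x‖ ≤ K * (t * ‖d‖) := by
      simpa [norm_smul, abs_of_pos ht.1] using hLip.norm_sub_le (x + t • d) x
    calc φ' t = ⟪Gf (x + t • d) - Gf x, d⟫ - K * t * ‖d‖ ^ 2 := by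
          simp only [φ', inner_sub_left]
      _ ≤ ‖Gf (x + t • d) - Gf x‖ * ‖d‖ - K * t * ‖d‖ ^ 2 := by
          gcongr; exact real_inner_le_norm _ _
      _ ≤ K * (t * ‖d‖) * ‖d‖ - K * t * ‖d‖ ^ 2 := by gcongr
      _ = 0 := by ring
  have hanti := antitoneOn_of_hasDerivWithinAt_nonpos (convex_Icc (0 : ℝ) 1)
    (fun t _ => (hφ t).continuousAt.continuousWithinAt)
    (fun t _ => (hφ t).hasDerivWithinAt) hφ'_nonpos
  have h10 : φ 1 ≤ φ 0 :=
    hanti (left_mem_Icc.2 zero_le_one) (right_mem_Icc.2 zero_le_one) zero_le_one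
  have hφ0 : φ 0 = f x := by simp [φ]
  have hφ1 : φ 1 = f y - ⟪Gf x, d⟫ - K / 2 * ‖d‖ ^ 2 := by simp [φ, d]
  linarith

theorem stmt_11_general {n : ℕ} (L ρ γ : ℝ) (hL : 0 ≤ L)
    (f g : EuclideanSpace ℝ (Fin n) → ℝ)
    (Gf : EuclideanSpace ℝ (Fin n) → EuclideanSpace ℝ (Fin n))
    (hGf : ∀ x, HasGradientAt f (Gf x) x)
    (hLip : LipschitzWith (Real.toNNReal L) Gf)
    (hg_wc : ConvexOn ℝ Set.univ (fun x => g x + ρ / 2 * ‖x‖ ^ 2))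
    (hγ0 : 0 < γ)
    (x0 x1 : EuclideanSpace ℝ (Fin n))
    (hstep : IsMinOn (fun z => g z + ‖z - (x0 - γ • Gf x0)‖ ^ 2 / (2 * γ)) Set.univ x1) :
    (1 / γ - (L + ρ) / 2) * ‖x0 - x1‖ ^ 2
      ≤ (f x0 + g x0) - (f x1 + g x1) := by
  have hdesc := le_add_inner_add_of_lipschitzWith_gradient hGf hLip x0 x1
  rw [Real.coe_toNNReal L hL, norm_sub_rev, ← neg_sub x0 x1, inner_neg_right] at hdesc
  have hprox := le_of_isMinOn_prox_of_convexOn_add_sq_norm hg_wc hstep x0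
  rw [sub_right_comm, inner_sub_left, real_inner_self_eq_norm_sq, real_inner_smul_left, mul_sub,
    ← mul_assoc, inv_mul_cancel₀ hγ0.ne', one_mul] at hprox
  linear_combination hdesc + hprox

theorem stmt_11 {n : ℕ} (L ρ γ : ℝ) (hL : 0 ≤ L)
    (f g : EuclideanSpace ℝ (Fin n) → ℝ)
    (Gf : EuclideanSpace ℝ (Fin n) → EuclideanSpace ℝ (Fin n))
    (hGf : ∀ x, HasGradientAt f (Gf x) x)
    (hLip : LipschitzWith (Real.toNNReal L) Gf)
    (hg_lsc : LowerSemicontinuous g)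
    (hg_wc : ConvexOn ℝ Set.univ (fun x => g x + ρ / 2 * ‖x‖ ^ 2))
    (hγ0 : 0 < γ) (hγ2 : γ < 2 / (L + ρ))
    (x0 x1 : EuclideanSpace ℝ (Fin n))
    (hstep : IsMinOn (fun z => g z + ‖z - (x0 - γ • Gf x0)‖ ^ 2 / (2 * γ)) Set.univ x1) :
    (1 / γ - (L + ρ) / 2) * ‖x0 - x1‖ ^ 2
      ≤ (f x0 + g x0) - (f x1 + g x1) :=
  stmt_11_general L ρ γ hL f g Gf hGf hLip hg_wc hγ0 x0 x1 hstep
end
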